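/- arXiv:2404.00156 — 4 statements merged into one kernel-verified Lean document; each statement's English description precedes it below -/
import Mathlib

section
/- The two expressions for the Dirichlet heat kernel on the interval [0,L] agree: for 0 < x, y < L and t > 0, (4πt)^{-1/2} Σ_{k∈ℤ} (e^{−(x−y+2kL)²/(4t)} − e^{−(x+y+2kL)²/(4t)}) = (2/L) Σ_{k=1}^∞ e^{−π²k²t/L²} sin(πkx/L) sin(πky/L). -/
/-!
Poisson summation (the Jacobi theta transformation) turns each image sum
`∑ₖ exp (-(v + 2kL)² / 4t)` into `(πt/L²)^{1/2} ∑ₙ exp (-π²n²t/L²) cos (πnv/L)`.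
Subtracting the cases `v = x - y` and `v = x + y` and using `cos (A - B) - cos (A + B) = 2 sin A sin B`
gives an even series vanishing at `n = 0`, which folds onto `n ≥ 1`.
-/

open Real

lemma summable_exp_neg_mul_add_sq {c : ℝ} (hc : 0 < c) (s : ℝ) :
    Summable fun n : ℤ => exp (-c * (n + s) ^ 2) := by
  -- up to the factor `exp (-c s²)`, these are the norms of the theta terms at `z = i c s / π`,
  -- `τ = i c / π`
  have hθ : Summable fun n : ℤ =>
      ‖jacobiTheta₂_term n (Complex.I * (c * s / π : ℝ)) (Complex.I * (c / π : ℝ))‖ :=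
    ((summable_jacobiTheta₂_term_iff _ _).mpr (by rw [Complex.I_mul_im, Complex.ofReal_re]; positivity)).norm
  refine (hθ.mul_left (exp (-c * s ^ 2))).congr fun n => ?_
  rw [norm_jacobiTheta₂_term, ← exp_add]
  simp only [Complex.I_mul_im, Complex.ofReal_re]
  congr 1
  field_simp
  ring

lemma Real.tsum_exp_neg_div_mul_add_sq {a : ℝ} (ha : 0 < a) (s : ℝ) :
    ∑' n : ℤ, exp (-π / a * (n + s) ^ 2) =
      a ^ (1 / 2 : ℝ) * ∑' n : ℤ, exp (-π * a * n ^ 2) * cos (2 * π * n * s) := by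
  have key := Complex.tsum_exp_neg_quadratic (a := a) (by simpa) (-Complex.I * s)
  have hterm (n : ℤ) : -π * (a : ℂ) * n ^ 2 + 2 * π * (-Complex.I * s) * n =
      (-π * a * n ^ 2 : ℝ) + (-(2 * π * n * s) : ℝ) * Complex.I := by
    push_cast; ring
  have hsum : Summable fun n : ℤ =>
      Complex.exp (-π * (a : ℂ) * n ^ 2 + 2 * π * (-Complex.I * s) * n) := by
    refine Summable.of_norm ((summable_exp_neg_mul_add_sq (mul_pos pi_pos ha) 0).congr fun n => ?_)
    rw [hterm, Complex.norm_exp, Complex.add_re, Complex.ofReal_re, Complex.re_ofReal_mul,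
      Complex.I_re]
    ring_nf
  have hrhs : 1 / (a : ℂ) ^ (1 / 2 : ℂ) *
      ∑' n : ℤ, Complex.exp (-π / a * (n + Complex.I * (-Complex.I * s)) ^ 2) =
      ((a ^ (1 / 2 : ℝ))⁻¹ * ∑' n : ℤ, exp (-π / a * (n + s) ^ 2) : ℝ) := by
    have hIs : Complex.I * (-Complex.I * s) = s := by
      rw [← mul_assoc, mul_neg, Complex.I_mul_I, neg_neg, one_mul]
    simp only [hIs, Complex.ofReal_mul, Complex.ofReal_inv, Complex.ofReal_cpow ha.le,
      Complex.ofReal_tsum, Complex.ofReal_exp]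
    push_cast
    rw [one_div]
  have hre := congrArg Complex.re (key.trans hrhs)
  rw [Complex.re_tsum hsum, Complex.ofReal_re] at hre
  simp only [hterm, Complex.exp_re, Complex.add_re, Complex.add_im, Complex.ofReal_re,
    Complex.ofReal_im, Complex.re_ofReal_mul, Complex.im_ofReal_mul, Complex.I_re, Complex.I_im,
    mul_zero, mul_one, add_zero, zero_add, cos_neg] at hre
  rw [hre, mul_inv_cancel_left₀ (rpow_pos_of_pos ha _).ne']

lemma tsum_int_eq_two_nsmul_tsum_nat_succ {G : Type*} [AddCommGroup G] [UniformSpace G]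
    [IsUniformAddGroup G] [CompleteSpace G] [T2Space G] {f : ℤ → G} (hf : f.Even) (h0 : f 0 = 0)
    (hs : Summable f) : ∑' n, f n = 2 • ∑' n : ℕ, f (n + 1) := by
  rw [tsum_int_eq_zero_add_two_mul_tsum_pnat hf hs, h0, zero_add,
    tsum_pnat_eq_tsum_succ (f := fun n : ℕ => f n)]
  push_cast
  rfl

section HeatKernel

variable {L t : ℝ}

lemma summable_exp_neg_add_two_mul_sq_div (hL : 0 < L) (ht : 0 < t) (v : ℝ) :
    Summable fun k : ℤ => exp (-(v + 2 * k * L) ^ 2 / (4 * t)) := by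
  refine (summable_exp_neg_mul_add_sq (c := L ^ 2 / t) (by positivity) (v / (2 * L))).congr
    fun k => ?_
  congr 1
  field_simp
  ring

lemma tsum_exp_neg_add_two_mul_sq_div (hL : 0 < L) (ht : 0 < t) (v : ℝ) :
    ∑' k : ℤ, exp (-(v + 2 * k * L) ^ 2 / (4 * t)) =
      (π * t / L ^ 2) ^ (1 / 2 : ℝ) *
        ∑' n : ℤ, exp (-(π ^ 2 * n ^ 2 / L ^ 2) * t) * cos (π * n * v / L) := by
  convert Real.tsum_exp_neg_div_mul_add_sq (a := π * t / L ^ 2) (by positivity) (v / (2 * L))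
    using 3 with k
  · congr 1
    field_simp
    ring
  · funext n
    congr 2 <;> field_simp

lemma summable_exp_neg_sq_div_sq_mul (hL : 0 < L) (ht : 0 < t) {g : ℤ → ℝ}
    (hg : ∀ n, |g n| ≤ 1) : Summable fun n : ℤ => exp (-(π ^ 2 * n ^ 2 / L ^ 2) * t) * g n := by
  refine (summable_exp_neg_mul_add_sq (c := π ^ 2 * t / L ^ 2) (by positivity) 0).of_norm_bounded
    fun n => ?_
  rw [show -(π ^ 2 * n ^ 2 / L ^ 2) * t = -(π ^ 2 * t / L ^ 2) * (n + 0) ^ 2 by ring, norm_mul,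
    norm_of_nonneg (exp_pos _).le, norm_eq_abs]
  exact mul_le_of_le_one_right (exp_pos _).le (hg n)

lemma tsum_int_exp_mul_sin_mul_sin (hL : 0 < L) (ht : 0 < t) (x y : ℝ) :
    ∑' n : ℤ, exp (-(π ^ 2 * n ^ 2 / L ^ 2) * t) * sin (π * n * x / L) * sin (π * n * y / L) =
      2 * ∑' k : ℕ, exp (-(π ^ 2 * ((k : ℝ) + 1) ^ 2 / L ^ 2) * t) *
        sin (π * ((k : ℝ) + 1) * x / L) * sin (π * ((k : ℝ) + 1) * y / L) := by
  set mode : ℤ → ℝ := fun n =>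
    exp (-(π ^ 2 * n ^ 2 / L ^ 2) * t) * sin (π * n * x / L) * sin (π * n * y / L)
  have hmode_even : mode.Even := fun n => by
    simp only [mode, Int.cast_neg, neg_sq, mul_neg, neg_mul, neg_div, sin_neg]
    ring
  have hmode_summable : Summable mode := by
    refine (summable_exp_neg_sq_div_sq_mul hL ht
      (g := fun n => sin (π * n * x / L) * sin (π * n * y / L)) fun n => ?_).congr
      fun n => (mul_assoc ..).symm
    rw [abs_mul]
    exact mul_le_one₀ (abs_sin_le_one _) (abs_nonneg _) (abs_sin_le_one _)
  rw [tsum_int_eq_two_nsmul_tsum_nat_succ hmode_even (by simp [mode]) hmode_summable,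
    nsmul_eq_mul]
  push_cast [mode]
  rfl

lemma tsum_exp_mul_cos_sub_tsum_exp_mul_cos (hL : 0 < L) (ht : 0 < t) (x y : ℝ) :
    ∑' n : ℤ, exp (-(π ^ 2 * n ^ 2 / L ^ 2) * t) * cos (π * n * (x - y) / L) -
        ∑' n : ℤ, exp (-(π ^ 2 * n ^ 2 / L ^ 2) * t) * cos (π * n * (x + y) / L) =
      2 * ∑' n : ℤ,
        exp (-(π ^ 2 * n ^ 2 / L ^ 2) * t) * sin (π * n * x / L) * sin (π * n * y / L) := by
  have hsummable (v : ℝ) :=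
    summable_exp_neg_sq_div_sq_mul hL ht (g := fun n => cos (π * n * v / L)) fun _ =>
      abs_cos_le_one _
  rw [← (hsummable _).tsum_sub (hsummable _), ← tsum_mul_left]
  refine tsum_congr fun n => ?_
  rw [show π * n * (x - y) / L = π * n * x / L - π * n * y / L by ring,
    show π * n * (x + y) / L = π * n * x / L + π * n * y / L by ring, cos_sub, cos_add]
  ring

lemma rpow_neg_half_four_pi_mul_rpow_half (hL : 0 < L) (ht : 0 < t) :
    (4 * π * t) ^ (-(1 : ℝ) / 2) * (π * t / L ^ 2) ^ (1 / 2 : ℝ) = 1 / (2 * L) := by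
  have hπt : 0 < π * t := by positivity
  rw [neg_div, rpow_neg (by positivity), ← sqrt_eq_rpow, ← sqrt_eq_rpow,
    sqrt_div' _ (by positivity), sqrt_sq hL.le, show 4 * π * t = 2 ^ 2 * (π * t) by ring,
    sqrt_mul' _ hπt.le, sqrt_sq zero_le_two]
  field_simp [(sqrt_pos.mpr hπt).ne']

end HeatKernel

theorem interval_heat_kernel_two_expressions_general (L t x y : ℝ) (hL : 0 < L)
    (ht : 0 < t) :
    (4 * Real.pi * t) ^ (-(1:ℝ)/2) *
        ∑' k : ℤ, (Real.exp (-(x - y + 2 * (k:ℝ) * L)^2 / (4 * t))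
          - Real.exp (-(x + y + 2 * (k:ℝ) * L)^2 / (4 * t)))
      = (2 / L) * ∑' k : ℕ,
          Real.exp (-(Real.pi^2 * ((k:ℝ)+1)^2 / L^2) * t) *
            Real.sin (Real.pi * ((k:ℝ)+1) * x / L) *
            Real.sin (Real.pi * ((k:ℝ)+1) * y / L) := by
  rw [(summable_exp_neg_add_two_mul_sq_div hL ht _).tsum_sub
      (summable_exp_neg_add_two_mul_sq_div hL ht _),
    tsum_exp_neg_add_two_mul_sq_div hL ht, tsum_exp_neg_add_two_mul_sq_div hL ht, ← mul_sub,
    tsum_exp_mul_cos_sub_tsum_exp_mul_cos hL ht, tsum_int_exp_mul_sin_mul_sin hL ht,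
    ← mul_assoc, rpow_neg_half_four_pi_mul_rpow_half hL ht]
  ring

/-- The image-charge and spectral expressions for the Dirichlet heat kernel on `[0,L]`
agree. -/
theorem interval_heat_kernel_two_expressions (L t x y : ℝ) (hL : 0 < L)
    (hx : 0 < x) (hxL : x < L) (hy : 0 < y) (hyL : y < L) (ht : 0 < t) :
    (4 * Real.pi * t) ^ (-(1:ℝ)/2) *
        ∑' k : ℤ, (Real.exp (-(x - y + 2 * (k:ℝ) * L)^2 / (4 * t))
          - Real.exp (-(x + y + 2 * (k:ℝ) * L)^2 / (4 * t)))
      = (2 / L) * ∑' k : ℕ,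
          Real.exp (-(Real.pi^2 * ((k:ℝ)+1)^2 / L^2) * t) *
            Real.sin (Real.pi * ((k:ℝ)+1) * x / L) *
            Real.sin (Real.pi * ((k:ℝ)+1) * y / L) :=
  interval_heat_kernel_two_expressions_general L t x y hL ht
end

section
/- The inverse Laplace transform of the inverse total Dirichlet-to-Neumann operator of two glued intervals satisfies the Poisson-resummation identity: for t > 0 and L₁, L₂ > 0, 2 Σ_{k≥1} ((−1)^{k+1}/(L₁+L₂)) e^{−π²k²t/(L₁+L₂)²} sin(πkL₁/(L₁+L₂)) sin(πkL₂/(L₁+L₂)) = (4πt)^{-1/2} Σ_{n∈ℤ} (e^{−(L₁+L₂)²n²/t} − e^{−((n+1)L₁+nL₂)²/t}). -/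
/-!
With `L = L₁ + L₂`, both sides are the Dirichlet heat kernel of `[0, L]` on the diagonal at the
gluing point `y = L₁`: the left-hand side is its eigenfunction expansion (by `L₂ = L - L₁`, the
sign `(-1)^(k+1)` turns `sin (π k L₁ / L) * sin (π k L₂ / L)` into `sin (π k L₁ / L) ^ 2`), the
right-hand side its method-of-images expansion. Writing `2 sin² = 1 - cos` and extending the even
sum over `k ≥ 1` to all of `ℤ`, the two agree by Jacobi's transformation
`∑ exp (-π a n²) cos (2π x n) = a^(-1/2) ∑ exp (-π (n + x)² / a)`, i.e. Poisson summation for a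
Gaussian.
-/

open Real

lemma summable_exp_neg_mul_int_add_sq {c : ℝ} (hc : 0 < c) (x : ℝ) :
    Summable fun n : ℤ ↦ rexp (-c * (n + x) ^ 2) :=
  (HurwitzKernelBounds.summable_f_int 0 x (t := c / π) (by positivity)).congr fun n ↦ by
    rw [HurwitzKernelBounds.f_int, pow_zero, one_mul]
    congr 1
    field_simp

lemma summable_exp_neg_mul_int_sq {c : ℝ} (hc : 0 < c) :
    Summable fun n : ℤ ↦ rexp (-c * n ^ 2) := by
  simpa using summable_exp_neg_mul_int_add_sq hc 0

lemma summable_exp_neg_mul_int_sq_mul_cos {c : ℝ} (hc : 0 < c) (ω : ℝ) :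
    Summable fun n : ℤ ↦ rexp (-c * n ^ 2) * cos (ω * n) :=
  (summable_exp_neg_mul_int_sq hc).of_norm_bounded fun n ↦ by
    rw [norm_mul, norm_of_nonneg (exp_pos _).le]
    exact mul_le_of_le_one_right (exp_pos _).le (abs_cos_le_one _)

theorem tsum_exp_neg_mul_int_sq_mul_cos {a : ℝ} (ha : 0 < a) (x : ℝ) :
    ∑' n : ℤ, rexp (-π * a * n ^ 2) * cos (2 * π * x * n) =
      1 / a ^ (1 / 2 : ℝ) * ∑' n : ℤ, rexp (-π / a * (n + x) ^ 2) := by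
  have hexponent (n : ℤ) : -(π : ℂ) * a * n ^ 2 + 2 * π * (-(Complex.I * x)) * n =
      ⟨-π * a * n ^ 2, -(2 * π * x * n)⟩ := by
    rw [Complex.mk_eq_add_mul_I]
    push_cast
    ring
  have hsummable : Summable fun n : ℤ ↦
      Complex.exp (-(π : ℂ) * a * n ^ 2 + 2 * π * (-(Complex.I * x)) * n) :=
    .of_norm <| (summable_exp_neg_mul_int_sq (c := π * a) (by positivity)).congr fun n ↦ by
      rw [hexponent, Complex.norm_exp]
      simp only [neg_mul]
  have hjacobi := congrArg Complex.re
    (Complex.tsum_exp_neg_quadratic (a := a) (by simpa using ha) (-(Complex.I * x)))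
  rw [Complex.re_tsum hsummable] at hjacobi
  convert hjacobi using 1
  · refine tsum_congr fun n ↦ ?_
    rw [hexponent, Complex.exp_re, cos_neg]
  · have hrhs : (1 : ℂ) / (a : ℂ) ^ (1 / 2 : ℂ) *
          ∑' n : ℤ, Complex.exp (-π / a * (n + Complex.I * -(Complex.I * x)) ^ 2) =
        ((1 / a ^ (1 / 2 : ℝ) * ∑' n : ℤ, rexp (-π / a * (n + x) ^ 2) : ℝ) : ℂ) := by
      rw [Complex.ofReal_mul, Complex.ofReal_tsum, Complex.ofReal_div, Complex.ofReal_cpow ha.le]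
      congr 1
      · norm_num
      · refine tsum_congr fun n ↦ ?_
        rw [Complex.ofReal_exp, mul_neg, ← mul_assoc, Complex.I_mul_I]
        push_cast
        ring_nf
    rw [hrhs, Complex.ofReal_re]

theorem tsum_exp_neg_mul_int_sq_mul_one_sub_cos {a : ℝ} (ha : 0 < a) (x : ℝ) :
    ∑' n : ℤ, rexp (-π * a * n ^ 2) * (1 - cos (2 * π * x * n)) =
      1 / a ^ (1 / 2 : ℝ) * ∑' n : ℤ, (rexp (-π / a * n ^ 2) - rexp (-π / a * (n + x) ^ 2)) := by
  have hπa : 0 < π * a := by positivity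
  have hπa' : 0 < π / a := by positivity
  simp_rw [mul_one_sub, neg_mul _ a, neg_div]
  rw [(summable_exp_neg_mul_int_sq hπa).tsum_sub (summable_exp_neg_mul_int_sq_mul_cos hπa _),
    (summable_exp_neg_mul_int_sq hπa').tsum_sub (summable_exp_neg_mul_int_add_sq hπa' x), mul_sub]
  simp_rw [← neg_mul _ a, ← neg_div]
  rw [Real.tsum_exp_neg_mul_int_sq ha, tsum_exp_neg_mul_int_sq_mul_cos ha]

lemma neg_one_pow_succ_mul_sin_mul_sin_of_add_eq_one (m : ℕ) {x y : ℝ} (h : x + y = 1) :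
    (-1) ^ (m + 1) * sin (π * m * x) * sin (π * m * y) = sin (π * m * x) ^ 2 := by
  have hy : π * m * y = m * π - π * m * x := by rw [← sub_eq_of_eq_add' h.symm]; ring
  have hsq : ((-1 : ℝ) ^ m) ^ 2 = 1 := by rw [← pow_mul, mul_comm, pow_mul, neg_one_sq, one_pow]
  rw [hy, sin_nat_mul_pi_sub, pow_succ]
  linear_combination sin (π * m * x) ^ 2 * hsq

theorem dirichlet_heat_kernel_eigenexpansion_eq_images {L t : ℝ} (hL : 0 < L) (ht : 0 < t)
    (y : ℝ) :
    2 / L * ∑' k : ℕ, rexp (-(π ^ 2 * ((k : ℝ) + 1) ^ 2 * t / L ^ 2)) *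
        sin (π * ((k : ℝ) + 1) * y / L) ^ 2 =
      (4 * π * t) ^ (-(1 : ℝ) / 2) *
        ∑' n : ℤ, (rexp (-(L ^ 2 * n ^ 2 / t)) - rexp (-((n * L + y) ^ 2 / t))) := by
  set a := π * t / L ^ 2 with ha_def
  have ha : 0 < a := by positivity
  set g : ℤ → ℝ := fun n ↦ rexp (-π * a * n ^ 2) * (1 - cos (2 * π * (y / L) * n)) with hg_def
  have hg_even : g.Even := fun n ↦ by simp only [hg_def, Int.cast_neg, neg_sq, mul_neg, cos_neg]
  have hg0 : g 0 = 0 := by simp [hg_def]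
  have hg_summable : Summable g := by
    have hπa : 0 < π * a := by positivity
    simpa only [hg_def, mul_one_sub, neg_mul] using
      (summable_exp_neg_mul_int_sq hπa).sub (summable_exp_neg_mul_int_sq_mul_cos hπa _)
  have hterm (k : ℕ) : rexp (-(π ^ 2 * ((k : ℝ) + 1) ^ 2 * t / L ^ 2)) *
      sin (π * ((k : ℝ) + 1) * y / L) ^ 2 = g (k + 1) / 2 := by
    have hexp : -(π ^ 2 * ((k : ℝ) + 1) ^ 2 * t / L ^ 2) = -π * a * ((k : ℝ) + 1) ^ 2 := by
      rw [ha_def]; ring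
    have hcos : 2 * (π * ((k : ℝ) + 1) * y / L) = 2 * π * (y / L) * ((k : ℝ) + 1) := by ring
    rw [sin_sq_eq_half_sub, hexp, hcos, hg_def]
    push_cast
    ring
  have himage (n : ℤ) : rexp (-π / a * n ^ 2) - rexp (-π / a * (n + y / L) ^ 2) =
      rexp (-(L ^ 2 * n ^ 2 / t)) - rexp (-((n * L + y) ^ 2 / t)) := by
    rw [ha_def]
    congr 2 <;> field_simp
  have hprefactor : 1 / (2 * L) * (1 / a ^ (1 / 2 : ℝ)) = (4 * π * t) ^ (-(1 : ℝ) / 2) := by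
    rw [neg_div, rpow_neg (by positivity), ← sqrt_eq_rpow, ← sqrt_eq_rpow, ha_def,
      show 4 * π * t = 2 ^ 2 * (π * t) by ring, sqrt_mul' _ (by positivity), sqrt_sq zero_le_two,
      sqrt_div' _ (by positivity), sqrt_sq hL.le]
    field_simp
  calc 2 / L * ∑' k : ℕ, rexp (-(π ^ 2 * ((k : ℝ) + 1) ^ 2 * t / L ^ 2)) *
        sin (π * ((k : ℝ) + 1) * y / L) ^ 2
      = 1 / (2 * L) * ∑' n : ℤ, g n := by
        rw [tsum_congr hterm, tsum_int_eq_zero_add_two_mul_tsum_pnat hg_even hg_summable,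
          tsum_pnat_eq_tsum_succ (f := fun k : ℕ ↦ g k), tsum_div_const, hg0, zero_add,
          nsmul_eq_mul]
        push_cast
        ring
    _ = (4 * π * t) ^ (-(1 : ℝ) / 2) *
        ∑' n : ℤ, (rexp (-(L ^ 2 * n ^ 2 / t)) - rexp (-((n * L + y) ^ 2 / t))) := by
      rw [hg_def, tsum_exp_neg_mul_int_sq_mul_one_sub_cos ha, ← mul_assoc, hprefactor,
        tsum_congr himage]

/-- Poisson-resummation identity for the inverse Laplace transform of the inverse total
Dirichlet-to-Neumann operator of two glued intervals. -/
theorem glued_intervals_poisson_resummation (L₁ L₂ t : ℝ)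
    (h1 : 0 < L₁) (h2 : 0 < L₂) (ht : 0 < t) :
    2 * ∑' k : ℕ,
        ((-1:ℝ)^((k:ℕ)+1+1) / (L₁ + L₂)) *
          Real.exp (-(Real.pi^2 * ((k:ℝ)+1)^2 * t / (L₁ + L₂)^2)) *
          Real.sin (Real.pi * ((k:ℝ)+1) * L₁ / (L₁ + L₂)) *
          Real.sin (Real.pi * ((k:ℝ)+1) * L₂ / (L₁ + L₂))
      = (4 * Real.pi * t) ^ (-(1:ℝ)/2) *
        ∑' n : ℤ, (Real.exp (-((L₁ + L₂)^2 * (n:ℝ)^2 / t))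
          - Real.exp (-((((n:ℝ)+1) * L₁ + (n:ℝ) * L₂)^2 / t))) := by
  have hL : 0 < L₁ + L₂ := by positivity
  have hsin (k : ℕ) : (-1) ^ (k + 1 + 1) * sin (π * ((k : ℝ) + 1) * L₁ / (L₁ + L₂)) *
      sin (π * ((k : ℝ) + 1) * L₂ / (L₁ + L₂)) = sin (π * ((k : ℝ) + 1) * L₁ / (L₁ + L₂)) ^ 2 := by
    simpa only [Nat.cast_succ, mul_div_assoc] using
      neg_one_pow_succ_mul_sin_mul_sin_of_add_eq_one (k + 1) (x := L₁ / (L₁ + L₂))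
        (y := L₂ / (L₁ + L₂)) (by field_simp)
  have hterm (k : ℕ) : (-1) ^ (k + 1 + 1) / (L₁ + L₂) *
      rexp (-(π ^ 2 * ((k : ℝ) + 1) ^ 2 * t / (L₁ + L₂) ^ 2)) *
      sin (π * ((k : ℝ) + 1) * L₁ / (L₁ + L₂)) * sin (π * ((k : ℝ) + 1) * L₂ / (L₁ + L₂)) =
      1 / (L₁ + L₂) * (rexp (-(π ^ 2 * ((k : ℝ) + 1) ^ 2 * t / (L₁ + L₂) ^ 2)) *
        sin (π * ((k : ℝ) + 1) * L₁ / (L₁ + L₂)) ^ 2) := by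
    rw [← hsin]; ring
  have himage (n : ℤ) : ((n : ℝ) + 1) * L₁ + n * L₂ = n * (L₁ + L₂) + L₁ := by ring
  rw [tsum_congr hterm, tsum_mul_left, ← mul_assoc, ← div_eq_mul_one_div,
    dirichlet_heat_kernel_eigenexpansion_eq_images hL ht]
  simp_rw [himage]
end

section
/- Convolution identity: for L > 0 and t > 0, ∫₀^t (4πτ)^{-1/2} · (2 Σ_{k≥1} (4π)^{-1/2}(t−τ)^{-3/2}(1 − 2k²L²/(t−τ)) e^{−k²L²/(t−τ)}) dτ = −2 Σ_{k≥1} kL/(√(4π) t^{3/2}) e^{−k²L²/t}; i.e., the convolution of L^{-1}[1/(2m)] with L^{-1}[m(coth(mL)−1)] (with the sign convention of the paper) equals −2 Σ_{k≥1} kL/(√(4π) t^{3/2}) e^{−k²L²/t}. -/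
open MeasureTheory Real

namespace ConvCothAux

open Set Filter Topology


open Set Filter Topology

lemma sq_rpow' (x y : ℝ) (hx : 0 ≤ x) : (x ^ (y:ℝ))^2 = x ^ (y*2) := by
  rw [← Real.rpow_natCast (x ^ (y:ℝ)) 2, ← Real.rpow_mul hx]
  norm_num

lemma pointwise_sub (a t v : ℝ) (ha : 0 < a) (ht : 0 < t) (hv : 0 < v) :
    |2*t*v/(1+v^2)^2| * ((t*v^2/(1+v^2)) ^ (-(1:ℝ)/2) *
      ((t - t*v^2/(1+v^2)) ^ (-(3:ℝ)/2) *
        ((1 - 2*a/(t - t*v^2/(1+v^2))) * Real.exp (-a/(t - t*v^2/(1+v^2))))))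
    = 2/t * ((1 - 2*(a/t)*(1+v^2)) * Real.exp (-(a/t)*(1+v^2))) := by
  have h1 : (0:ℝ) < 1 + v^2 := by positivity
  have hs : t - t*v^2/(1+v^2) = t/(1+v^2) := by field_simp; ring
  rw [hs]
  have hτ : (0:ℝ) < t*v^2/(1+v^2) := by positivity
  set A := (t*v^2/(1+v^2)) ^ (-(1:ℝ)/2) with hA
  set B := (t/(1+v^2)) ^ (-(3:ℝ)/2) with hB
  have hA2 : A^2 = (t*v^2/(1+v^2))⁻¹ := by
    rw [hA, show (-(1:ℝ)/2) = ((-(1:ℝ)/2):ℝ) from rfl, sq_rpow' _ _ hτ.le]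
    norm_num [Real.rpow_neg_one]
  have hB2 : B^2 = ((t/(1+v^2))^3)⁻¹ := by
    rw [hB, sq_rpow' _ _ (by positivity : (0:ℝ) ≤ t/(1+v^2))]
    rw [show (-(3:ℝ)/2*2) = ((-3:ℤ):ℝ) by norm_num, Real.rpow_intCast]
    simp [zpow_neg]
  have hAnn : 0 ≤ A := Real.rpow_nonneg hτ.le _
  have hBnn : 0 ≤ B := Real.rpow_nonneg (by positivity) _
  have habs : |2*t*v/(1+v^2)^2| = 2*t*v/(1+v^2)^2 := abs_of_pos (by positivity)
  have hP : (2*t*v/(1+v^2)^2) * (A * B) = 2/t := by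
    have hPnn : 0 ≤ (2*t*v/(1+v^2)^2) * (A * B) := by positivity
    have hsq : ((2*t*v/(1+v^2)^2) * (A * B))^2 = (2/t)^2 := by
      have : ((2*t*v/(1+v^2)^2) * (A * B))^2
          = (2*t*v/(1+v^2)^2)^2 * (A^2 * B^2) := by ring
      rw [this, hA2, hB2]
      field_simp
    nlinarith [hPnn, div_pos (by norm_num : (0:ℝ) < 2) ht]
  have harg : -a/(t/(1+v^2)) = -(a/t)*(1+v^2) := by field_simp
  have hfac : 1 - 2*a/(t/(1+v^2)) = 1 - 2*(a/t)*(1+v^2) := by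
    congr 1; field_simp
  rw [habs, harg, hfac]
  calc 2*t*v/(1+v^2)^2 * (A * (B * ((1 - 2*(a/t)*(1+v^2)) * Real.exp (-(a/t)*(1+v^2)))))
      = (2*t*v/(1+v^2)^2 * (A*B)) * ((1 - 2*(a/t)*(1+v^2)) * Real.exp (-(a/t)*(1+v^2))) := by ring
    _ = 2/t * ((1 - 2*(a/t)*(1+v^2)) * Real.exp (-(a/t)*(1+v^2))) := by rw [hP]

lemma int_sq_gauss (b : ℝ) (hb : 0 < b) :
    Integrable (fun v : ℝ => v^2 * Real.exp (-b*v^2)) := by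
  have := integrable_rpow_mul_exp_neg_mul_sq hb (s := 2) (by norm_num)
  refine this.congr (Filter.Eventually.of_forall fun x => ?_)
  simp [Real.rpow_natCast]

lemma int_f1 (b : ℝ) (hb : 0 < b) :
    Integrable (fun v : ℝ => (1 - 2*b*v^2) * Real.exp (-b*v^2)) := by
  have h1 := integrable_exp_neg_mul_sq hb
  have h2 := (int_sq_gauss b hb).const_mul (2*b)
  refine (h1.sub h2).congr (Filter.Eventually.of_forall fun x => ?_)
  simp only [Pi.sub_apply]
  ring

lemma gauss_part1 (b : ℝ) (hb : 0 < b) :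
    ∫ v in Set.Ioi (0:ℝ), (1 - 2*b*v^2) * Real.exp (-b*v^2) = 0 := by
  have hderiv : ∀ x ∈ Set.Ioi (0:ℝ),
      HasDerivAt (fun v : ℝ => v * Real.exp (-b*v^2)) ((1 - 2*b*x^2) * Real.exp (-b*x^2)) x := by
    intro x _
    have h1 : HasDerivAt (fun v : ℝ => -b*v^2) (-b*(2*x)) x := by
      simpa using ((hasDerivAt_pow 2 x).const_mul (-b))
    have h2 : HasDerivAt (fun v : ℝ => Real.exp (-b*v^2)) (Real.exp (-b*x^2) * (-b*(2*x))) x :=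
      (Real.hasDerivAt_exp _).comp x h1 |>.congr_deriv (by ring)
    have := (hasDerivAt_id x).fun_mul h2
    refine this.congr_deriv ?_
    simp only [id_eq]
    ring
  have htend : Tendsto (fun v : ℝ => v * Real.exp (-b*v^2)) atTop (𝓝 0) := by
    have h := rpow_mul_exp_neg_mul_sq_isLittleO_exp_neg hb 1
    have h2 : (fun v : ℝ => v * Real.exp (-b*v^2)) =o[atTop]
        fun x : ℝ => Real.exp (-(1/2) * x) := by
      refine h.congr' (Filter.Eventually.of_forall fun x => ?_)
        (Filter.Eventually.of_forall fun x => rfl)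
      simp [Real.rpow_one]
    have hb2 : Tendsto (fun x : ℝ => -(1/2)*x) atTop atBot := by
      have h4 : Tendsto (fun x : ℝ => x/2) atTop atTop :=
        tendsto_id.atTop_div_const (by norm_num)
      have := tendsto_neg_atTop_atBot.comp h4
      refine this.congr fun x => ?_
      simp [Function.comp]
      ring
    have h3 : Tendsto (fun x : ℝ => Real.exp (-(1/2) * x)) atTop (𝓝 0) :=
      Real.tendsto_exp_atBot.comp hb2
    exact h2.isBigO.trans_tendsto h3
  have hcont : ContinuousWithinAt (fun v : ℝ => v * Real.exp (-b*v^2)) (Set.Ici 0) 0 :=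
    Continuous.continuousWithinAt (by continuity)
  have := integral_Ioi_of_hasDerivAt_of_tendsto
    (f := fun v : ℝ => v * Real.exp (-b*v^2))
    hcont hderiv ((int_f1 b hb).integrableOn) htend
  simpa using this

lemma gauss_eval (b : ℝ) (hb : 0 < b) :
    ∫ v in Set.Ioi (0:ℝ), (1 - 2*b*(1+v^2)) * Real.exp (-b*v^2)
      = -Real.sqrt (Real.pi*b) := by
  have hsplit : ∀ v : ℝ, (1 - 2*b*(1+v^2)) * Real.exp (-b*v^2)
      = (1 - 2*b*v^2) * Real.exp (-b*v^2) + (-2*b) * Real.exp (-b*v^2) := by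
    intro v; ring
  rw [MeasureTheory.setIntegral_congr_fun measurableSet_Ioi (fun v _ => hsplit v)]
  rw [MeasureTheory.integral_add ((int_f1 b hb).integrableOn)
    (((integrable_exp_neg_mul_sq hb).const_mul _).integrableOn)]
  rw [gauss_part1 b hb, MeasureTheory.integral_const_mul, integral_gaussian_Ioi]
  rw [show Real.pi * b = b^2 * (Real.pi / b) by field_simp,
    Real.sqrt_mul (sq_nonneg b), Real.sqrt_sq hb.le]
  ring

lemma abs_one_sub_two_mul_le (x : ℝ) (hx : 0 ≤ x) : |1 - 2*x| ≤ 2 * Real.exp (x/2) := by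
  have h1 : Real.exp (x/2) = Real.exp (x/4) * Real.exp (x/4) := by
    rw [← Real.exp_add]; ring_nf
  have h2 := Real.add_one_le_exp (x/4)
  have h3 := Real.exp_pos (x/4)
  rw [abs_le]
  constructor
  · nlinarith [mul_le_mul h2 h2 (by linarith : (0:ℝ) ≤ x/4 + 1) h3.le, sq_nonneg (x-4)]
  · nlinarith

lemma phi_image {t : ℝ} (ht : 0 < t) :
    (fun v : ℝ => t * v^2 / (1 + v^2)) '' Set.Ioi 0 = Set.Ioo 0 t := by
  ext x
  constructor
  · rintro ⟨v, hv, rfl⟩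
    simp only [Set.mem_Ioi] at hv
    have h1 : (0:ℝ) < 1 + v^2 := by positivity
    constructor
    · positivity
    · rw [div_lt_iff₀ h1]; nlinarith
  · rintro ⟨hx1, hx2⟩
    have h1 : 0 < t - x := by linarith
    refine ⟨Real.sqrt (x / (t - x)), Set.mem_Ioi.mpr (by positivity), ?_⟩
    have h2 : Real.sqrt (x/(t-x)) ^ 2 = x/(t-x) := Real.sq_sqrt (by positivity)
    show t * Real.sqrt (x/(t-x)) ^ 2 / (1 + Real.sqrt (x/(t-x)) ^ 2) = x
    rw [h2]; field_simp; ring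

lemma phi_deriv (t : ℝ) : ∀ v ∈ Set.Ioi (0:ℝ),
    HasDerivWithinAt (fun v : ℝ => t * v^2 / (1 + v^2)) (2*t*v/(1+v^2)^2) (Set.Ioi 0) v := by
  intro v _
  have h1 : (0:ℝ) < 1 + v^2 := by positivity
  have : HasDerivAt (fun v : ℝ => t * v^2 / (1 + v^2)) (2*t*v/(1+v^2)^2) v := by
    have hd : HasDerivAt (fun v : ℝ => t * v^2 / (1 + v^2))
        (((t*(2*v)) * (1+v^2) - (t*v^2) * (2*v)) / (1+v^2)^2) v := by
      exact (((hasDerivAt_pow 2 v).const_mul t).div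
        ((hasDerivAt_pow 2 v).const_add 1) (by positivity)).congr_deriv (by ring_nf)
    convert hd using 1; field_simp; ring
  exact this.hasDerivWithinAt

lemma phi_inj {t : ℝ} (ht : 0 < t) :
    Set.InjOn (fun v : ℝ => t * v^2 / (1 + v^2)) (Set.Ioi 0) := by
  intro x hx y hy h
  simp only [Set.mem_Ioi] at hx hy
  simp only at h
  have hx1 : (0:ℝ) < 1 + x^2 := by positivity
  have hy1 : (0:ℝ) < 1 + y^2 := by positivity
  field_simp at h
  have : x^2 = y^2 := by nlinarith
  nlinarith

lemma subst_eq {t : ℝ} (ht : 0 < t) (g : ℝ → ℝ) :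
    ∫ τ in Set.Ioo (0:ℝ) t, g τ
      = ∫ v in Set.Ioi (0:ℝ), |2*t*v/(1+v^2)^2| * g (t*v^2/(1+v^2)) := by
  rw [← phi_image ht,
    integral_image_eq_integral_abs_deriv_smul measurableSet_Ioi (phi_deriv t) (phi_inj ht)]
  simp [smul_eq_mul]

lemma transformed_eq {a t : ℝ} (ha : 0 < a) (ht : 0 < t) :
    ∀ v ∈ Set.Ioi (0:ℝ),
      |2*t*v/(1+v^2)^2| * (fun τ : ℝ => τ ^ (-(1:ℝ)/2) * ((t-τ) ^ (-(3:ℝ)/2) *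
          ((1 - 2*a/(t-τ)) * Real.exp (-a/(t-τ))))) (t*v^2/(1+v^2))
      = 2/t * ((1 - 2*(a/t)*(1+v^2)) * Real.exp (-(a/t)*(1+v^2))) := by
  intro v hv
  exact pointwise_sub a t v ha ht hv

lemma gaussform_integrable {a t : ℝ} (ha : 0 < a) (ht : 0 < t) :
    Integrable (fun v : ℝ => 2/t * ((1 - 2*(a/t)*(1+v^2)) * Real.exp (-(a/t)*(1+v^2)))) := by
  have hb : 0 < a/t := by positivity
  have h1 : ∀ v : ℝ, (1 - 2*(a/t)*(1+v^2)) * Real.exp (-(a/t)*(1+v^2))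
      = Real.exp (-(a/t)) * ((1 - 2*(a/t)*v^2) * Real.exp (-(a/t)*v^2))
        + Real.exp (-(a/t)) * ((-2*(a/t)) * Real.exp (-(a/t)*v^2)) := by
    intro v
    rw [show -(a/t)*(1+v^2) = -(a/t) + -(a/t)*v^2 by ring, Real.exp_add]
    ring
  have h2 := ((int_f1 (a/t) hb).const_mul (Real.exp (-(a/t)))).add
    ((((integrable_exp_neg_mul_sq hb).const_mul (-2*(a/t)))).const_mul (Real.exp (-(a/t))))
  exact ((h2.congr (Filter.Eventually.of_forall fun v => (h1 v).symm)).const_mul _)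

lemma key_integrable {a t : ℝ} (ha : 0 < a) (ht : 0 < t) :
    IntegrableOn (fun τ : ℝ => τ ^ (-(1:ℝ)/2) * ((t-τ) ^ (-(3:ℝ)/2) *
      ((1 - 2*a/(t-τ)) * Real.exp (-a/(t-τ))))) (Set.Ioo 0 t) := by
  rw [← phi_image ht,
    integrableOn_image_iff_integrableOn_abs_deriv_smul measurableSet_Ioi (phi_deriv t) (phi_inj ht)]
  refine ((gaussform_integrable ha ht).integrableOn).congr_fun ?_ measurableSet_Ioi
  intro v hv
  simp only [smul_eq_mul]
  exact ((transformed_eq ha ht) v hv).symm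

lemma key_eval {a t : ℝ} (ha : 0 < a) (ht : 0 < t) :
    ∫ τ in Set.Ioo (0:ℝ) t, τ ^ (-(1:ℝ)/2) * ((t-τ) ^ (-(3:ℝ)/2) *
        ((1 - 2*a/(t-τ)) * Real.exp (-a/(t-τ))))
      = -(2/t) * Real.exp (-(a/t)) * Real.sqrt (Real.pi*(a/t)) := by
  have hb : 0 < a/t := by positivity
  rw [subst_eq ht]
  rw [MeasureTheory.setIntegral_congr_fun measurableSet_Ioi (transformed_eq ha ht)]
  have h1 : ∀ v : ℝ, 2/t * ((1 - 2*(a/t)*(1+v^2)) * Real.exp (-(a/t)*(1+v^2)))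
      = (2/t * Real.exp (-(a/t))) * ((1 - 2*(a/t)*(1+v^2)) * Real.exp (-(a/t)*v^2)) := by
    intro v
    rw [show -(a/t)*(1+v^2) = -(a/t) + -(a/t)*v^2 by ring, Real.exp_add]
    ring
  rw [MeasureTheory.setIntegral_congr_fun measurableSet_Ioi (fun v _ => h1 v),
    MeasureTheory.integral_const_mul, gauss_eval (a/t) hb]
  ring

lemma key_norm {a t : ℝ} (ha : 0 < a) (ht : 0 < t) :
    ∫ τ in Set.Ioo (0:ℝ) t, ‖τ ^ (-(1:ℝ)/2) * ((t-τ) ^ (-(3:ℝ)/2) *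
        ((1 - 2*a/(t-τ)) * Real.exp (-a/(t-τ))))‖
      ≤ 2/t * Real.exp (-(a/(2*t))) * Real.sqrt (Real.pi/(a/(2*t))) := by
  have hb : 0 < a/t := by positivity
  have hb2 : 0 < a/(2*t) := by positivity
  rw [subst_eq ht (fun τ : ℝ => ‖τ ^ (-(1:ℝ)/2) * ((t-τ) ^ (-(3:ℝ)/2) *
        ((1 - 2*a/(t-τ)) * Real.exp (-a/(t-τ))))‖)]
  have hcongr : ∀ v ∈ Set.Ioi (0:ℝ),
      |2*t*v/(1+v^2)^2| * (fun τ : ℝ => ‖τ ^ (-(1:ℝ)/2) * ((t-τ) ^ (-(3:ℝ)/2) *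
        ((1 - 2*a/(t-τ)) * Real.exp (-a/(t-τ))))‖) (t*v^2/(1+v^2))
      = ‖2/t * ((1 - 2*(a/t)*(1+v^2)) * Real.exp (-(a/t)*(1+v^2)))‖ := by
    intro v hv
    simp only [Real.norm_eq_abs]
    rw [← abs_abs (2*t*v/(1+v^2)^2), ← abs_mul, pointwise_sub a t v ha ht hv]
  rw [MeasureTheory.setIntegral_congr_fun measurableSet_Ioi hcongr]
  have hBint : Integrable (fun v : ℝ =>
      (2/t * (2 * Real.exp (-(a/(2*t))))) * Real.exp (-(a/(2*t))*v^2)) :=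
    (integrable_exp_neg_mul_sq hb2).const_mul _
  refine le_trans (MeasureTheory.setIntegral_mono_on (s := Set.Ioi (0:ℝ))
    ((gaussform_integrable ha ht).norm.integrableOn)
    hBint.integrableOn measurableSet_Ioi ?_) (le_of_eq ?_)
  swap
  · rw [MeasureTheory.integral_const_mul, integral_gaussian_Ioi]
    ring
  · intro v hv
    have hx : 0 ≤ (a/t)*(1+v^2) := by positivity
    rw [mul_assoc 2 (a/t) (1+v^2), show -(a/t)*(1+v^2) = -((a/t)*(1+v^2)) from by ring]
    set x := (a/t)*(1+v^2) with hxdef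
    have key : |1 - 2*x| ≤ 2 * Real.exp (x/2) := abs_one_sub_two_mul_le x hx
    have hexp : Real.exp (-x) = Real.exp (-(x/2)) * Real.exp (-(x/2)) := by
      rw [← Real.exp_add]; ring_nf
    have hsplit : Real.exp (-(x/2)) = Real.exp (-(a/(2*t))) * Real.exp (-(a/(2*t))*v^2) := by
      rw [← Real.exp_add]
      congr 1
      rw [hxdef]; field_simp; ring
    calc ‖2/t * ((1 - 2*x) * Real.exp (-x))‖
        = 2/t * (|1 - 2*x| * Real.exp (-x)) := by
          rw [Real.norm_eq_abs, abs_mul, abs_mul, abs_of_pos (by positivity : (0:ℝ) < 2/t),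
            Real.abs_exp]
      _ ≤ 2/t * ((2 * Real.exp (x/2)) * Real.exp (-x)) := by
          gcongr
      _ = 2/t * (2 * Real.exp (-(x/2))) := by
          have h7 : Real.exp (x/2) * Real.exp (-(x/2)) = 1 := by
            rw [← Real.exp_add]; norm_num
          rw [hexp]
          linear_combination (4/t) * Real.exp (-(x/2)) * h7
      _ = (2/t * (2 * Real.exp (-(a/(2*t))))) * Real.exp (-(a/(2*t))*v^2) := by
          rw [hsplit]; ring

lemma termfun_eq {L t : ℝ} (ht : 0 < t) (k : ℕ) :
    ∀ τ ∈ Set.Ioo (0:ℝ) t,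
      (4*Real.pi*τ) ^ (-(1:ℝ)/2) * (2 * ((4*Real.pi) ^ (-(1:ℝ)/2) * (t-τ) ^ (-(3:ℝ)/2) *
        (1 - 2*((k:ℝ)+1)^2*L^2/(t-τ)) * Real.exp (-((k:ℝ)+1)^2*L^2/(t-τ))))
      = (1/(2*Real.pi)) * (τ ^ (-(1:ℝ)/2) * ((t-τ) ^ (-(3:ℝ)/2) *
        ((1 - 2*(((k:ℝ)+1)^2*L^2)/(t-τ)) * Real.exp (-(((k:ℝ)+1)^2*L^2)/(t-τ))))) := by
  intro τ hτ
  have h4π : (0:ℝ) < 4*Real.pi := by positivity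
  have h1 : (4*Real.pi*τ) ^ (-(1:ℝ)/2) = (4*Real.pi) ^ (-(1:ℝ)/2) * τ ^ (-(1:ℝ)/2) :=
    Real.mul_rpow h4π.le hτ.1.le
  have h2 : (4*Real.pi) ^ (-(1:ℝ)/2) * (4*Real.pi) ^ (-(1:ℝ)/2) = (4*Real.pi)⁻¹ := by
    rw [← Real.rpow_add h4π]
    norm_num [Real.rpow_neg_one]
  have h3 : -((k:ℝ)+1)^2*L^2/(t-τ) = -(((k:ℝ)+1)^2*L^2)/(t-τ) := by ring
  have hF : 1 - 2*((k:ℝ)+1)^2*L^2/(t-τ) = 1 - 2*(((k:ℝ)+1)^2*L^2)/(t-τ) := by ring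
  rw [h1, h3, hF]
  linear_combination (2 * τ ^ (-(1:ℝ)/2) * ((t-τ) ^ (-(3:ℝ)/2)) *
    (1 - 2*(((k:ℝ)+1)^2*L^2)/(t-τ)) * Real.exp (-(((k:ℝ)+1)^2*L^2)/(t-τ))) * h2


lemma term_integral {L t : ℝ} (hL : 0 < L) (ht : 0 < t) (k : ℕ) :
    ∫ τ in Set.Ioo (0:ℝ) t,
      (4*Real.pi*τ) ^ (-(1:ℝ)/2) * (2 * ((4*Real.pi) ^ (-(1:ℝ)/2) * (t-τ) ^ (-(3:ℝ)/2) *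
        (1 - 2*((k:ℝ)+1)^2*L^2/(t-τ)) * Real.exp (-((k:ℝ)+1)^2*L^2/(t-τ))))
    = -2 * ((((k:ℝ)+1)*L/(Real.sqrt (4*Real.pi) * t ^ ((3:ℝ)/2))) *
        Real.exp (-((k:ℝ)+1)^2*L^2/t)) := by
  have ha : 0 < ((k:ℝ)+1)^2*L^2 := by positivity
  rw [MeasureTheory.setIntegral_congr_fun measurableSet_Ioo (termfun_eq ht k),
    MeasureTheory.integral_const_mul, key_eval ha ht]
  have hexp : Real.exp (-((((k:ℝ)+1)^2*L^2)/t)) = Real.exp (-((k:ℝ)+1)^2*L^2/t) := by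
    congr 1; ring
  have h5 : Real.sqrt (Real.pi*((((k:ℝ)+1)^2*L^2)/t)) = (((k:ℝ)+1)*L) * Real.sqrt (Real.pi/t) := by
    rw [show Real.pi*((((k:ℝ)+1)^2*L^2)/t) = ((((k:ℝ)+1))*L)^2 * (Real.pi/t) by ring,
      Real.sqrt_mul (sq_nonneg _), Real.sqrt_sq (by positivity)]
  have h6 : Real.sqrt (Real.pi/t) = Real.sqrt Real.pi / Real.sqrt t :=
    Real.sqrt_div Real.pi_pos.le t
  have h7 : t ^ ((3:ℝ)/2) = t * Real.sqrt t := by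
    rw [show (3:ℝ)/2 = 1 + 1/2 by norm_num, Real.rpow_add ht, Real.rpow_one,
      ← Real.sqrt_eq_rpow]
  have h8 : Real.sqrt (4*Real.pi) = 2 * Real.sqrt Real.pi := by
    rw [show (4:ℝ)*Real.pi = 2^2*Real.pi by ring, Real.sqrt_mul (by positivity),
      Real.sqrt_sq (by norm_num)]
  have hππ : Real.sqrt Real.pi * Real.sqrt Real.pi = Real.pi :=
    Real.mul_self_sqrt Real.pi_pos.le
  have hsπ : Real.sqrt Real.pi ≠ 0 := by positivity
  have hst : Real.sqrt t ≠ 0 := by positivity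
  rw [hexp, h5, h6, h7, h8]
  field_simp
  ring_nf
  rw [Real.sq_sqrt Real.pi_pos.le]


lemma F_integrable {L t : ℝ} (hL : 0 < L) (ht : 0 < t) (k : ℕ) :
    IntegrableOn (fun τ : ℝ =>
      (4*Real.pi*τ) ^ (-(1:ℝ)/2) * (2 * ((4*Real.pi) ^ (-(1:ℝ)/2) * (t-τ) ^ (-(3:ℝ)/2) *
        (1 - 2*((k:ℝ)+1)^2*L^2/(t-τ)) * Real.exp (-((k:ℝ)+1)^2*L^2/(t-τ)))))
      (Set.Ioo 0 t) := by
  have ha : 0 < ((k:ℝ)+1)^2*L^2 := by positivity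
  have h : IntegrableOn (fun τ : ℝ => (1/(2*Real.pi)) * (τ ^ (-(1:ℝ)/2) * ((t-τ) ^ (-(3:ℝ)/2) *
      ((1 - 2*(((k:ℝ)+1)^2*L^2)/(t-τ)) * Real.exp (-(((k:ℝ)+1)^2*L^2)/(t-τ)))))) (Set.Ioo 0 t) :=
    (key_integrable ha ht).const_mul _
  exact h.congr_fun (fun τ hτ => (termfun_eq ht k τ hτ).symm) measurableSet_Ioo

lemma F_norm_bound {L t : ℝ} (hL : 0 < L) (ht : 0 < t) (k : ℕ) :
    ∫ τ in Set.Ioo (0:ℝ) t, ‖(4*Real.pi*τ) ^ (-(1:ℝ)/2) * (2 * ((4*Real.pi) ^ (-(1:ℝ)/2) *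
        (t-τ) ^ (-(3:ℝ)/2) * (1 - 2*((k:ℝ)+1)^2*L^2/(t-τ)) *
        Real.exp (-((k:ℝ)+1)^2*L^2/(t-τ))))‖
      ≤ (1/(2*Real.pi)) * (2/t * Real.exp (-((((k:ℝ)+1)^2*L^2)/(2*t))) *
          Real.sqrt (Real.pi/((((k:ℝ)+1)^2*L^2)/(2*t)))) := by
  have ha : 0 < ((k:ℝ)+1)^2*L^2 := by positivity
  have hcongr : ∀ τ ∈ Set.Ioo (0:ℝ) t,
      ‖(4*Real.pi*τ) ^ (-(1:ℝ)/2) * (2 * ((4*Real.pi) ^ (-(1:ℝ)/2) * (t-τ) ^ (-(3:ℝ)/2) *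
        (1 - 2*((k:ℝ)+1)^2*L^2/(t-τ)) * Real.exp (-((k:ℝ)+1)^2*L^2/(t-τ))))‖
      = (1/(2*Real.pi)) * ‖τ ^ (-(1:ℝ)/2) * ((t-τ) ^ (-(3:ℝ)/2) *
        ((1 - 2*(((k:ℝ)+1)^2*L^2)/(t-τ)) * Real.exp (-(((k:ℝ)+1)^2*L^2)/(t-τ))))‖ := by
    intro τ hτ
    rw [termfun_eq ht k τ hτ, norm_mul]
    congr 1
    rw [Real.norm_eq_abs, abs_of_pos (by positivity)]
  rw [MeasureTheory.setIntegral_congr_fun measurableSet_Ioo hcongr,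
    MeasureTheory.integral_const_mul]
  exact mul_le_mul_of_nonneg_left (key_norm ha ht) (by positivity)

lemma summable_bound {L t : ℝ} (hL : 0 < L) (ht : 0 < t) :
    Summable (fun k : ℕ => (1/(2*Real.pi)) * (2/t * Real.exp (-((((k:ℝ)+1)^2*L^2)/(2*t))) *
      Real.sqrt (Real.pi/((((k:ℝ)+1)^2*L^2)/(2*t))))) := by
  set q : ℝ := Real.exp (-(L^2/(2*t))) with hq
  have hq0 : 0 < q := Real.exp_pos _
  have hq1 : q < 1 := by
    rw [hq, Real.exp_lt_one_iff]
    have : 0 < L^2/(2*t) := by positivity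
    linarith
  set C : ℝ := (1/(2*Real.pi)) * (2/t * Real.sqrt (Real.pi/(L^2/(2*t)))) with hC
  have hsum : Summable (fun k : ℕ => C * q^(k+1)) := by
    have := (summable_geometric_of_lt_one hq0.le hq1).mul_left (C * q)
    refine this.congr fun k => ?_
    rw [pow_succ]
    ring
  refine Summable.of_nonneg_of_le (fun k => by positivity) (fun k => ?_) hsum
  have hk1 : (1:ℝ) ≤ ((k:ℝ)+1) := by
    have : (0:ℝ) ≤ (k:ℝ) := Nat.cast_nonneg k
    linarith
  have hb1 : Real.sqrt (Real.pi/((((k:ℝ)+1)^2*L^2)/(2*t))) ≤ Real.sqrt (Real.pi/(L^2/(2*t))) := by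
    apply Real.sqrt_le_sqrt
    apply div_le_div_of_nonneg_left Real.pi_pos.le (by positivity)
    apply div_le_div_of_nonneg_right ?_ (by positivity)
    nlinarith [hk1, sq_nonneg L, mul_le_mul hk1 hk1 zero_le_one (by linarith : (0:ℝ) ≤ (k:ℝ)+1)]
  have hb2 : Real.exp (-((((k:ℝ)+1)^2*L^2)/(2*t))) ≤ q^(k+1) := by
    have hnk : (q:ℝ)^(k+1) = Real.exp (-(((k:ℝ)+1)*(L^2/(2*t)))) := by
      rw [hq, ← Real.exp_nat_mul]
      congr 1
      push_cast
      ring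
    rw [hnk]
    apply Real.exp_le_exp.mpr
    rw [neg_le_neg_iff, show ((k:ℝ)+1) * (L^2/(2*t)) = (((k:ℝ)+1)*L^2)/(2*t) from by ring]
    gcongr
    nlinarith [hk1, sq_nonneg L]
  calc (1/(2*Real.pi)) * (2/t * Real.exp (-((((k:ℝ)+1)^2*L^2)/(2*t))) *
      Real.sqrt (Real.pi/((((k:ℝ)+1)^2*L^2)/(2*t))))
      ≤ (1/(2*Real.pi)) * (2/t * q^(k+1) * Real.sqrt (Real.pi/(L^2/(2*t)))) := by
        apply mul_le_mul_of_nonneg_left ?_ (by positivity)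
        apply mul_le_mul ?_ hb1 (Real.sqrt_nonneg _) (by positivity)
        exact mul_le_mul_of_nonneg_left hb2 (by positivity)
    _ = C * q^(k+1) := by rw [hC]; ring


end ConvCothAux

open ConvCothAux in
/-- The convolution of `L⁻¹[1/(2m)](τ) = (4πτ)^{-1/2}` with
`L⁻¹[m(coth(mL)−1)](s) = 2Σ_{k≥1}(4π)^{-1/2}s^{-3/2}(1−2k²L²/s)e^{−k²L²/s}` equals
`−2 Σ_{k≥1} kL/(√(4π) t^{3/2}) e^{−k²L²/t}` (sign convention of the paper). -/
theorem convolution_coth_remainder (L t : ℝ) (hL : 0 < L) (ht : 0 < t) :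
    ∫ τ in Set.Ioo (0:ℝ) t,
        (4 * Real.pi * τ) ^ (-(1:ℝ)/2) *
          (2 * ∑' k : ℕ, (4 * Real.pi) ^ (-(1:ℝ)/2) * (t - τ) ^ (-(3:ℝ)/2) *
            (1 - 2 * ((k:ℝ)+1)^2 * L^2 / (t - τ)) * Real.exp (-((k:ℝ)+1)^2 * L^2 / (t - τ)))
      = -2 * ∑' k : ℕ,
          (((k:ℝ)+1) * L / (Real.sqrt (4 * Real.pi) * t ^ ((3:ℝ)/2))) *
            Real.exp (-((k:ℝ)+1)^2 * L^2 / t) := by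
  have hmain : ∫ τ in Set.Ioo (0:ℝ) t,
      ∑' k : ℕ, (4 * Real.pi * τ) ^ (-(1:ℝ)/2) *
          (2 * ((4 * Real.pi) ^ (-(1:ℝ)/2) * (t - τ) ^ (-(3:ℝ)/2) *
            (1 - 2 * ((k:ℝ)+1)^2 * L^2 / (t - τ)) * Real.exp (-((k:ℝ)+1)^2 * L^2 / (t - τ))))
      = ∑' k : ℕ, ∫ τ in Set.Ioo (0:ℝ) t, (4 * Real.pi * τ) ^ (-(1:ℝ)/2) *
          (2 * ((4 * Real.pi) ^ (-(1:ℝ)/2) * (t - τ) ^ (-(3:ℝ)/2) *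
            (1 - 2 * ((k:ℝ)+1)^2 * L^2 / (t - τ)) *
              Real.exp (-((k:ℝ)+1)^2 * L^2 / (t - τ)))) := by
    refine (MeasureTheory.integral_tsum_of_summable_integral_norm
      (fun k => F_integrable hL ht k) ?_).symm
    refine Summable.of_nonneg_of_le
      (fun k => MeasureTheory.integral_nonneg (fun τ => norm_nonneg _))
      (fun k => F_norm_bound hL ht k) (summable_bound hL ht)
  have hLHS : ∫ τ in Set.Ioo (0:ℝ) t,
      (4 * Real.pi * τ) ^ (-(1:ℝ)/2) *
        (2 * ∑' k : ℕ, (4 * Real.pi) ^ (-(1:ℝ)/2) * (t - τ) ^ (-(3:ℝ)/2) *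
          (1 - 2 * ((k:ℝ)+1)^2 * L^2 / (t - τ)) * Real.exp (-((k:ℝ)+1)^2 * L^2 / (t - τ)))
      = ∫ τ in Set.Ioo (0:ℝ) t,
      ∑' k : ℕ, (4 * Real.pi * τ) ^ (-(1:ℝ)/2) *
          (2 * ((4 * Real.pi) ^ (-(1:ℝ)/2) * (t - τ) ^ (-(3:ℝ)/2) *
            (1 - 2 * ((k:ℝ)+1)^2 * L^2 / (t - τ)) *
              Real.exp (-((k:ℝ)+1)^2 * L^2 / (t - τ)))) := by
    apply MeasureTheory.integral_congr_ae
    filter_upwards with τ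
    rw [← tsum_mul_left, ← tsum_mul_left]
  rw [hLHS, hmain, ← tsum_mul_left]
  exact tsum_congr (fun k => term_integral hL ht k)
end

section
/- Path weight factorization lemma: for composable paths γ₁ (ending at w) and γ₂ (starting at w) on a finite graph, W(γ₁ * γ₂, t) = ∫₀^t W(γ̄₁, τ) W(γ₂, t−τ) dτ, where γ̄₁ denotes γ₁ with its last vertex dropped and W(γ,t) is the simplex-integral path weight. -/
/-!
Write `K_c x = 𝟙(x > 0) e^{-c x}`. Reading `sᵢ` as the time spent at `vᵢ₊₁` and `t - ∑ sᵢ` as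
the time spent at `v₀`, the integrand of `W(γ, t)` is `K_{d v₀}(t - ∑ sᵢ) ∏ᵢ K_{d vᵢ₊₁}(sᵢ)`
(`d` = degree), so Fubini over one coordinate at a time shows that `W(γ, ·)` is the convolution
`K_{d v₀} ⋆ K_{d v₁} ⋆ ⋯ ⋆ K_{d v_k}`. The vertices of `γ̄₁` and of `γ₂` together are those of
`γ₁ * γ₂`, so the factorization is associativity of convolution. Working with `ℝ≥0∞`-valued
Lebesgue integrals removes all integrability side conditions; finiteness is only needed to
return to real numbers at the end.
-/

open MeasureTheory Real

/-- The weight `W(γ,t)` of a path (walk) `γ = (v₀,…,v_k)` in a graph. -/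
noncomputable def pathWeight {V : Type*} [Fintype V] [DecidableEq V]
    (G : SimpleGraph V) [DecidableRel G.Adj] {u v : V} (γ : G.Walk u v) (t : ℝ) : ℝ :=
  ∫ s in {s : Fin γ.length → ℝ | (∀ i, 0 < s i) ∧ ∑ i, s i < t},
    Real.exp (-((t - ∑ i, s i) * (G.degree u : ℝ)
      + ∑ i : Fin γ.length, s i * (G.degree (γ.getVert (i + 1)) : ℝ)))

open scoped ENNReal

theorem lintegral_pi_fin_succ {α : Type*} [MeasurableSpace α] (μ : Measure α) [SigmaFinite μ]
    {n : ℕ} (F : (Fin (n + 1) → α) → ℝ≥0∞) (hF : Measurable F) :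
    ∫⁻ s, F s ∂Measure.pi (fun _ => μ)
      = ∫⁻ x, ∫⁻ r, F (Fin.cons x r) ∂Measure.pi (fun _ => μ) ∂μ := by
  rw [← ((measurePreserving_piFinSuccAbove (fun _ => μ) 0).symm).lintegral_comp_emb
      (MeasurableEquiv.measurableEmbedding _),
    lintegral_prod _ (by exact (hF.comp (MeasurableEquiv.measurable _)).aemeasurable)]
  simp [MeasurableEquiv.piFinSuccAbove_symm_apply, Fin.insertNthEquiv, Fin.insertNth_zero']

theorem lconvolution_eq_setLIntegral_Ioo {f g : ℝ → ℝ≥0∞} (hf : ∀ x ≤ 0, f x = 0)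
    (hg : ∀ x ≤ 0, g x = 0) (t : ℝ) :
    (f ⋆ₗ g) t = ∫⁻ y in Set.Ioo 0 t, f y * g (t - y) := by
  rw [lconvolution_def, ← lintegral_indicator measurableSet_Ioo]
  refine lintegral_congr fun y => ?_
  rw [neg_add_eq_sub]
  by_cases hy : y ∈ Set.Ioo 0 t
  · rw [Set.indicator_of_mem hy]
  rw [Set.indicator_of_notMem hy]
  rcases le_or_gt y 0 with hy₀ | hy₀
  · rw [hf y hy₀, zero_mul]
  · rw [hg _ (sub_nonpos.2 (not_lt.1 (not_and.1 hy hy₀))), mul_zero]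

/-- `simplexLConv g f` is the iterated convolution `g 0 ⋆ₗ (g 1 ⋆ₗ ⋯ ⋆ₗ (g (n-1) ⋆ₗ f))`,
written as a single integral over the arguments of the `g i`. -/
noncomputable def simplexLConv {n : ℕ} (g : Fin n → ℝ → ℝ≥0∞) (f : ℝ → ℝ≥0∞) (t : ℝ) : ℝ≥0∞ :=
  ∫⁻ s : Fin n → ℝ, f (t - ∑ i, s i) * ∏ i, g i (s i)

section simplexLConv

variable {n : ℕ} {g : Fin n → ℝ → ℝ≥0∞} {f : ℝ → ℝ≥0∞}

theorem simplexLConv_zero (g : Fin 0 → ℝ → ℝ≥0∞) (f : ℝ → ℝ≥0∞) : simplexLConv g f = f := by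
  ext t
  simp [simplexLConv, lintegral_const, volume_pi]

theorem simplexLConv_succ {g : Fin (n + 1) → ℝ → ℝ≥0∞} (hg : ∀ i, Measurable (g i))
    (hf : Measurable f) : simplexLConv g f = g 0 ⋆ₗ simplexLConv (Fin.tail g) f := by
  have hg_tail : ∀ i, Measurable (Fin.tail g i) := fun i => hg i.succ
  ext t
  rw [simplexLConv, lconvolution_def, volume_pi, lintegral_pi_fin_succ volume _ (by fun_prop)]
  refine lintegral_congr fun x => ?_
  simp only [Fin.sum_univ_succ, Fin.prod_univ_succ, Fin.cons_zero, Fin.cons_succ]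
  rw [simplexLConv, ← lintegral_const_mul _ (by fun_prop)]
  refine lintegral_congr fun r => ?_
  rw [mul_left_comm, sub_add_eq_sub_sub, neg_add_eq_sub]
  rfl

theorem measurable_simplexLConv (hg : ∀ i, Measurable (g i)) (hf : Measurable f) :
    Measurable (simplexLConv g f) := by
  unfold simplexLConv
  fun_prop

theorem simplexLConv_lconvolution {a b : ℝ → ℝ≥0∞} (hg : ∀ i, Measurable (g i))
    (ha : Measurable a) (hb : Measurable b) :
    simplexLConv g (a ⋆ₗ b) = a ⋆ₗ simplexLConv g b := by
  induction n with
  | zero => simp only [simplexLConv_zero]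
  | succ n ih =>
    have hS : Measurable (simplexLConv (Fin.tail g) b) :=
      measurable_simplexLConv (fun i => hg i.succ) hb
    rw [simplexLConv_succ hg (measurable_lconvolution _ ha hb),
      ih (g := Fin.tail g) fun i => hg i.succ, simplexLConv_succ hg hb,
      lconvolution_assoc (hg 0) ha hS, lconvolution_comm (f := g 0),
      ← lconvolution_assoc ha (hg 0) hS]

theorem simplexLConv_lt_top (hg_le : ∀ i x, g i x ≤ 1) (hg_zero : ∀ i x, x ≤ 0 → g i x = 0)
    (hf_le : ∀ x, f x ≤ 1) (hf_zero : ∀ x ≤ 0, f x = 0) (t : ℝ) :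
    simplexLConv g f t < ⊤ := by
  have hbound : ∀ s : Fin n → ℝ,
      f (t - ∑ i, s i) * ∏ i, g i (s i) ≤ (Set.Icc 0 fun _ => t).indicator 1 s := by
    intro s
    by_cases hs : s ∈ Set.Icc 0 fun _ => t
    · rw [Set.indicator_of_mem hs]
      exact mul_le_one' (hf_le _) (Finset.prod_le_one' fun i _ => hg_le i _)
    rw [Set.indicator_of_notMem hs, nonpos_iff_eq_zero]
    by_contra hne
    simp only [mul_eq_zero, Finset.prod_eq_zero_iff, Finset.mem_univ, true_and, not_or,
      not_exists] at hne
    have hpos : ∀ i, 0 < s i := fun i => lt_of_not_ge fun h => hne.2 i (hg_zero i _ h)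
    have hsum : ∑ i, s i < t := lt_of_not_ge fun h => hne.1 (hf_zero _ (sub_nonpos.2 h))
    exact hs ⟨fun i => (hpos i).le, fun i =>
      (Finset.single_le_sum (fun j _ => (hpos j).le) (Finset.mem_univ i)).trans hsum.le⟩
  calc simplexLConv g f t ≤ ∫⁻ s, (Set.Icc 0 fun _ => t).indicator 1 s := lintegral_mono hbound
    _ = volume (Set.Icc (0 : Fin n → ℝ) fun _ => t) := lintegral_indicator_one measurableSet_Icc
    _ < ⊤ := isCompact_Icc.measure_lt_top

end simplexLConv

noncomputable def expKernel (c : ℝ) : ℝ → ℝ≥0∞ :=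
  (Set.Ioi 0).indicator fun x => ENNReal.ofReal (exp (-(x * c)))

theorem measurable_expKernel (c : ℝ) : Measurable (expKernel c) :=
  Measurable.indicator (by fun_prop) measurableSet_Ioi

theorem expKernel_of_nonpos (c : ℝ) {x : ℝ} (hx : x ≤ 0) : expKernel c x = 0 :=
  Set.indicator_of_notMem (not_lt.2 hx) _

theorem expKernel_of_pos (c : ℝ) {x : ℝ} (hx : 0 < x) :
    expKernel c x = ENNReal.ofReal (exp (-(x * c))) :=
  Set.indicator_of_mem hx _

theorem expKernel_le_one {c : ℝ} (hc : 0 ≤ c) (x : ℝ) : expKernel c x ≤ 1 := by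
  refine Set.indicator_apply_le' (fun hx => ?_) fun _ => zero_le_one
  rw [ENNReal.ofReal_le_one, exp_le_one_iff, neg_nonpos]
  exact mul_nonneg (le_of_lt hx) hc

theorem expKernel_mul_prod_expKernel {n : ℕ} (c₀ : ℝ) (c : Fin n → ℝ) (t : ℝ) (s : Fin n → ℝ) :
    expKernel c₀ (t - ∑ i, s i) * ∏ i, expKernel (c i) (s i)
      = {s : Fin n → ℝ | (∀ i, 0 < s i) ∧ ∑ i, s i < t}.indicator
          (fun s => ENNReal.ofReal (exp (-((t - ∑ i, s i) * c₀ + ∑ i, s i * c i)))) s := by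
  by_cases hs : s ∈ {s : Fin n → ℝ | (∀ i, 0 < s i) ∧ ∑ i, s i < t}
  · rw [Set.indicator_of_mem hs, expKernel_of_pos _ (sub_pos.2 hs.2)]
    simp only [expKernel_of_pos _ (hs.1 _)]
    rw [← ENNReal.ofReal_prod_of_nonneg fun _ _ => (exp_pos _).le,
      ← ENNReal.ofReal_mul (exp_pos _).le, ← exp_sum, ← exp_add, neg_add,
      ← Finset.sum_neg_distrib]
  rw [Set.indicator_of_notMem hs]
  simp only [Set.mem_ofPred_eq, not_and_or, not_forall, not_lt] at hs
  rcases hs with ⟨i, hi⟩ | hsum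
  · rw [Finset.prod_eq_zero (Finset.mem_univ i) (expKernel_of_nonpos _ hi), mul_zero]
  · rw [expKernel_of_nonpos _ (sub_nonpos.2 hsum), zero_mul]

namespace SimpleGraph

open Walk

variable {V : Type*} [Fintype V] (G : SimpleGraph V) [DecidableRel G.Adj]

noncomputable def walkWeight {u v : V} (γ : G.Walk u v) : ℝ → ℝ≥0∞ :=
  simplexLConv (fun i : Fin γ.length => expKernel (G.degree (γ.getVert (i + 1))))
    (expKernel (G.degree u))

variable {G}

theorem pathWeight_eq_toReal_walkWeight [DecidableEq V] {u v : V} (γ : G.Walk u v) (t : ℝ) :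
    pathWeight G γ t = (G.walkWeight γ t).toReal := by
  have hS : MeasurableSet {s : Fin γ.length → ℝ | (∀ i, 0 < s i) ∧ ∑ i, s i < t} := by
    measurability
  rw [pathWeight, integral_eq_lintegral_of_nonneg_ae (ae_of_all _ fun _ => (exp_pos _).le)
    (by fun_prop), ← lintegral_indicator hS, walkWeight, simplexLConv]
  simp only [expKernel_mul_prod_expKernel]

theorem measurable_walkWeight {u v : V} (γ : G.Walk u v) : Measurable (G.walkWeight γ) :=
  measurable_simplexLConv (fun _ => measurable_expKernel _) (measurable_expKernel _)

theorem walkWeight_lt_top {u v : V} (γ : G.Walk u v) (t : ℝ) : G.walkWeight γ t < ⊤ :=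
  simplexLConv_lt_top (fun _ => expKernel_le_one (Nat.cast_nonneg _))
    (fun _ _ => expKernel_of_nonpos _) (expKernel_le_one (Nat.cast_nonneg _))
    (fun _ => expKernel_of_nonpos _) t

theorem walkWeight_nil (u : V) : G.walkWeight (nil : G.Walk u u) = expKernel (G.degree u) :=
  simplexLConv_zero _ _

theorem walkWeight_cons {u w v : V} (h : G.Adj u w) (γ : G.Walk w v) :
    G.walkWeight (cons h γ) = expKernel (G.degree u) ⋆ₗ G.walkWeight γ := by
  have hK : ∀ i : Fin γ.length, Measurable (expKernel (G.degree (γ.getVert (i + 1)))) :=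
    fun _ => measurable_expKernel _
  -- `walkWeight` keeps the kernel of the first vertex in the last slot, hence the commutation.
  calc G.walkWeight (cons h γ)
      = expKernel (G.degree w) ⋆ₗ simplexLConv (fun i => expKernel (G.degree (γ.getVert (i + 1))))
          (expKernel (G.degree u)) := by
        refine (simplexLConv_succ (n := γ.length) (fun _ => measurable_expKernel _)
          (measurable_expKernel _)).trans ?_
        congr 1
        rw [Fin.val_zero, getVert_cons_succ, getVert_zero]
    _ = simplexLConv (fun i => expKernel (G.degree (γ.getVert (i + 1))))
          (expKernel (G.degree w) ⋆ₗ expKernel (G.degree u)) :=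
        (simplexLConv_lconvolution hK (measurable_expKernel _) (measurable_expKernel _)).symm
    _ = expKernel (G.degree u) ⋆ₗ G.walkWeight γ := by
        rw [lconvolution_comm, simplexLConv_lconvolution hK (measurable_expKernel _)
          (measurable_expKernel _), walkWeight]

theorem walkWeight_of_nonpos {u v : V} (γ : G.Walk u v) {t : ℝ} (ht : t ≤ 0) :
    G.walkWeight γ t = 0 := by
  induction γ generalizing t with
  | nil => rw [walkWeight_nil, expKernel_of_nonpos _ ht]
  | cons h γ ih =>
    rw [walkWeight_cons, lconvolution_eq_setLIntegral_Ioo (fun _ => expKernel_of_nonpos _)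
      (fun _ => ih), Set.Ioo_eq_empty_of_le ht, Measure.restrict_empty, lintegral_zero_measure]

theorem walkWeight_append_cons {u w' w v : V} (p : G.Walk u w') (h : G.Adj w' w)
    (q : G.Walk w v) :
    G.walkWeight (p.append (cons h q)) = G.walkWeight p ⋆ₗ G.walkWeight q := by
  induction p with
  | nil => rw [nil_append, walkWeight_cons, walkWeight_nil]
  | cons h' p ih =>
    rw [cons_append, walkWeight_cons, ih, walkWeight_cons, lconvolution_assoc
      (measurable_expKernel _) (measurable_walkWeight p) (measurable_walkWeight q)]

end SimpleGraph

/-- `γ₁ = p.concat h`, `γ̄₁ = p`, `γ₂ = q`. -/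
theorem pathWeight_factorization_general {V : Type*} [Fintype V] [DecidableEq V]
    (G : SimpleGraph V) [DecidableRel G.Adj] {u w' w v : V}
    (p : G.Walk u w') (h : G.Adj w' w) (q : G.Walk w v) (t : ℝ) :
    pathWeight G ((p.concat h).append q) t
      = ∫ τ in Set.Ioo (0:ℝ) t, pathWeight G p τ * pathWeight G q (t - τ) := by
  have hmeas : Measurable fun τ => G.walkWeight p τ * G.walkWeight q (t - τ) :=
    (SimpleGraph.measurable_walkWeight p).mul
      ((SimpleGraph.measurable_walkWeight q).comp (measurable_const.sub measurable_id))
  have hfin : ∀ τ, G.walkWeight p τ * G.walkWeight q (t - τ) < ⊤ := fun τ =>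
    ENNReal.mul_lt_top (SimpleGraph.walkWeight_lt_top p τ) (SimpleGraph.walkWeight_lt_top q _)
  simp_rw [SimpleGraph.pathWeight_eq_toReal_walkWeight, ← ENNReal.toReal_mul]
  rw [integral_toReal hmeas.aemeasurable (ae_of_all _ hfin), SimpleGraph.Walk.concat_append,
    SimpleGraph.walkWeight_append_cons,
    lconvolution_eq_setLIntegral_Ioo (fun _ => SimpleGraph.walkWeight_of_nonpos p)
      (fun _ => SimpleGraph.walkWeight_of_nonpos q)]

/-- Path weight factorization: for composable paths `γ₁ = p.concat h` (ending at `w`,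
with `γ̄₁ = p` its truncation dropping the last vertex) and `γ₂ = q` (starting at `w`),
`W(γ₁ * γ₂, t) = ∫₀^t W(γ̄₁, τ) W(γ₂, t−τ) dτ`. -/
theorem pathWeight_factorization {V : Type*} [Fintype V] [DecidableEq V]
    (G : SimpleGraph V) [DecidableRel G.Adj] {u w' w v : V}
    (p : G.Walk u w') (h : G.Adj w' w) (q : G.Walk w v) (t : ℝ) (ht : 0 < t) :
    pathWeight G ((p.concat h).append q) t
      = ∫ τ in Set.Ioo (0:ℝ) t, pathWeight G p τ * pathWeight G q (t - τ) :=
  pathWeight_factorization_general G p h q t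
end
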